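/- arXiv:2505.20950 — 2 statements merged into one kernel-verified Lean document; each statement's English description precedes it below -/
import Mathlib

section
/- If the kernel {γ_j}_{0≤j≤J} satisfies the Parseval condition Σ_{j=0}^J |γ_j(r)|² = 1 for all r ∈ {1,…,k}, then for all f ∈ L²(G): Σ_{j=0}^J ‖ψ_{γ_j} ∗ f‖² = ‖f‖². -/
open scoped BigOperators
open MeasureTheory

noncomputable def conv {G : Type*} [Group G] [Fintype G] (f g : G → ℂ) : G → ℂ :=
  fun x => (Fintype.card G : ℂ)⁻¹ * ∑ y, f y * g (y⁻¹ * x)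

noncomputable def nsq {G : Type*} [Fintype G] (f : G → ℂ) : ℝ :=
  (Fintype.card G : ℝ)⁻¹ * ∑ x, Complex.normSq (f x)

noncomputable def ip {G : Type*} [Fintype G] (f g : G → ℂ) : ℂ :=
  (Fintype.card G : ℂ)⁻¹ * ∑ x, f x * (starRingEnd ℂ) (g x)

noncomputable def gwavelet {G : Type*} [Group G] {k : ℕ} (d : Fin k → ℕ)
    (π : (r : Fin k) → G →* Matrix (Fin (d r)) (Fin (d r)) ℂ)
    (γ : Fin k → ℂ) : G → ℂ :=
  fun x => ∑ r, (d r : ℂ) * γ r * Matrix.trace (π r x)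

noncomputable def Upath {G : Type*} [Group G] [Fintype G] {J : ℕ}
    (ψ : Fin J → G → ℂ) : List (Fin J) → (G → ℂ) → G → ℂ
  | [], f => f
  | j :: p, f => Upath ψ p fun x => ((‖conv (ψ j) f x‖ : ℝ) : ℂ)

noncomputable def Sop {G : Type*} [Group G] [Fintype G] {k J : ℕ} (d : Fin k → ℕ)
    (π : (r : Fin k) → G →* Matrix (Fin (d r)) (Fin (d r)) ℂ)
    (γ : Fin (J + 1) → Fin k → ℂ) (p : List (Fin J)) (f : G → ℂ) : G → ℂ :=
  conv (gwavelet d π (γ 0)) (Upath (fun j => gwavelet d π (γ j.succ)) p f)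

/-
With `e_r = d_r χ^r` one has `ψ_γ ∗ f = ∑_r γ(r) (e_r ∗ f)`. Schur's lemma, applied to the
averages `∑_x π^r(x) E π^s(x)⁻¹`, gives `χ^s ∗ χ^r = 0` for `r ≠ s`; since convolution with the
character of a unitary representation is self-adjoint, the pieces `e_r ∗ f` are pairwise
orthogonal. They add up to `f` because `∑_r d_r χ^r = |G| δ_1`: the characters are orthonormal
class functions, as many as there are conjugacy classes, so the character table is invertible,
and this identity is its column orthogonality at the identity. Pythagoras then gives
`∑_j ‖ψ_{γ_j} ∗ f‖² = ∑_r (∑_j |γ_j(r)|²) ‖e_r ∗ f‖² = ∑_r ‖e_r ∗ f‖² = ‖f‖²`.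
-/

open ComplexConjugate

section Convolution

variable {G : Type*} [Group G] [Fintype G]

lemma conv_assoc (a b f : G → ℂ) : conv (conv a b) f = conv a (conv b f) := by
  ext x
  simp only [conv, Finset.mul_sum, Finset.sum_mul]
  rw [Finset.sum_comm]
  refine Finset.sum_congr rfl fun y _ =>
    (Fintype.sum_equiv (Equiv.mulLeft y) _ _ fun z => ?_).symm
  simp only [Equiv.coe_mulLeft, inv_mul_cancel_left, mul_inv_rev, mul_assoc]
  ring

lemma conv_smul_left (c : ℂ) (g f : G → ℂ) : conv (c • g) f = c • conv g f := by
  ext x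
  simp only [conv, Pi.smul_apply, smul_eq_mul, Finset.mul_sum]
  exact Finset.sum_congr rfl fun y _ => by ring

lemma conv_sum_left {ι : Type*} (s : Finset ι) (g : ι → G → ℂ) (f : G → ℂ) :
    conv (∑ i ∈ s, g i) f = ∑ i ∈ s, conv (g i) f := by
  ext x
  simp only [conv, Finset.sum_apply, Finset.sum_mul, Finset.mul_sum]
  exact Finset.sum_comm

lemma conv_zero_left (f : G → ℂ) : conv 0 f = 0 := by
  ext x
  simp [conv]

lemma conv_ite_one_left [DecidableEq G] (f : G → ℂ) :
    conv (fun y => if y = 1 then (Fintype.card G : ℂ) else 0) f = f := by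
  have hG : (Fintype.card G : ℂ) ≠ 0 := Nat.cast_ne_zero.mpr Fintype.card_ne_zero
  ext x
  simp [conv, hG]

lemma ip_conv_right (u g f : G → ℂ) :
    ip u (conv g f) = ip (conv (fun z => conj (g z⁻¹)) u) f := by
  simp only [ip, conv, map_mul, map_sum, map_inv₀, map_natCast, Finset.mul_sum, Finset.sum_mul]
  rw [Finset.sum_comm]
  conv_rhs => rw [Finset.sum_comm]
  refine Fintype.sum_equiv (Equiv.inv G) _ _ fun y =>
    Fintype.sum_equiv (Equiv.mulLeft y⁻¹) _ _ fun x => ?_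
  simp only [Equiv.inv_apply, Equiv.coe_mulLeft, inv_inv, mul_inv_cancel_left]
  ring

end Convolution

section InnerProduct

variable {G : Type*} [Fintype G]

lemma ofReal_nsq (f : G → ℂ) : (nsq f : ℂ) = ip f f := by
  simp [nsq, ip, Complex.mul_conj]

lemma ip_smul_left (c : ℂ) (u v : G → ℂ) : ip (c • u) v = c * ip u v := by
  simp only [ip, Pi.smul_apply, smul_eq_mul, Finset.mul_sum]
  exact Finset.sum_congr rfl fun x _ => by ring

lemma ip_smul_right (c : ℂ) (u v : G → ℂ) : ip u (c • v) = conj c * ip u v := by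
  simp only [ip, Pi.smul_apply, smul_eq_mul, map_mul, Finset.mul_sum]
  exact Finset.sum_congr rfl fun x _ => by ring

lemma ip_sum_left {ι : Type*} (s : Finset ι) (u : ι → G → ℂ) (v : G → ℂ) :
    ip (∑ i ∈ s, u i) v = ∑ i ∈ s, ip (u i) v := by
  simp only [ip, Finset.sum_apply, Finset.sum_mul, Finset.mul_sum]
  exact Finset.sum_comm

lemma ip_sum_right {ι : Type*} (s : Finset ι) (u : G → ℂ) (v : ι → G → ℂ) :
    ip u (∑ i ∈ s, v i) = ∑ i ∈ s, ip u (v i) := by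
  simp only [ip, Finset.sum_apply, map_sum, Finset.mul_sum]
  exact Finset.sum_comm

lemma ip_zero_left (v : G → ℂ) : ip 0 v = 0 := by
  simp [ip]

variable {ι : Type*} [Fintype ι]

lemma nsq_sum_smul_of_pairwise_ip_eq_zero (F : ι → G → ℂ)
    (hF : Pairwise fun r s => ip (F r) (F s) = 0) (c : ι → ℂ) :
    nsq (∑ r, c r • F r) = ∑ r, Complex.normSq (c r) * nsq (F r) := by
  apply Complex.ofReal_injective
  push_cast
  rw [ofReal_nsq, ip_sum_left]
  refine Finset.sum_congr rfl fun r _ => ?_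
  rw [ip_smul_left, ip_sum_right, Finset.sum_eq_single r
    (fun s _ hs => by rw [ip_smul_right, hF hs.symm, mul_zero]) (by simp),
    ip_smul_right, ofReal_nsq, ← Complex.mul_conj]
  ring

lemma sum_nsq_sum_smul_of_pairwise_ip_eq_zero {κ : Type*} [Fintype κ] (F : ι → G → ℂ)
    (hF : Pairwise fun r s => ip (F r) (F s) = 0) (c : κ → ι → ℂ)
    (hc : ∀ r, ∑ j, Complex.normSq (c j r) = 1) :
    ∑ j, nsq (∑ r, c j r • F r) = nsq (∑ r, F r) := by
  have hsum := nsq_sum_smul_of_pairwise_ip_eq_zero F hF 1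
  simp only [Pi.one_apply, one_smul, map_one, one_mul] at hsum
  simp only [nsq_sum_smul_of_pairwise_ip_eq_zero F hF, hsum]
  rw [Finset.sum_comm]
  simp only [← Finset.sum_mul, hc, one_mul]

end InnerProduct

section Characters

variable {G : Type*} [Group G] {m n : Type*} [Fintype m] [Fintype n] [DecidableEq m]
  [DecidableEq n]

def NoIntertwiner (ρ : G →* Matrix m m ℂ) (σ : G →* Matrix n n ℂ) : Prop :=
  ∀ T : Matrix m n ℂ, (∀ x, ρ x * T = T * σ x) → T = 0

def IsSchurIrreducible (ρ : G →* Matrix m m ℂ) : Prop :=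
  ∀ M : Matrix m m ℂ, (∀ x, M * ρ x = ρ x * M) → ∃ c : ℂ, M = c • 1

def character (ρ : G →* Matrix m m ℂ) (x : G) : ℂ := (ρ x).trace

lemma character_inv_of_unitary {ρ : G →* Matrix m m ℂ}
    (hρ : ∀ x, ρ x ∈ Matrix.unitaryGroup m ℂ) (x : G) :
    character ρ x⁻¹ = conj (character ρ x) := by
  have hinv : ρ x⁻¹ = star (ρ x) :=
    left_inv_eq_right_inv (by rw [← map_mul, inv_mul_cancel, map_one])
      (Matrix.mem_unitaryGroup_iff.mp (hρ x))
  rw [character, hinv, Matrix.star_eq_conjTranspose, Matrix.trace_conjTranspose]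
  rfl

lemma character_eq_of_isConj (ρ : G →* Matrix m m ℂ) {x y : G} (h : IsConj x y) :
    character ρ x = character ρ y := by
  obtain ⟨c, rfl⟩ := isConj_iff.mp h
  simp only [character, map_mul]
  rw [Matrix.trace_mul_cycle, ← map_mul, inv_mul_cancel, map_one, Matrix.one_mul]

lemma character_one (ρ : G →* Matrix m m ℂ) : character ρ 1 = Fintype.card m := by
  simp [character]

variable [Fintype G]

lemma mul_sum_mul_mul_inv (ρ : G →* Matrix m m ℂ) (σ : G →* Matrix n n ℂ) (E : Matrix m n ℂ)
    (y : G) : ρ y * ∑ x, ρ x * E * σ x⁻¹ = (∑ x, ρ x * E * σ x⁻¹) * σ y := by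
  simp only [Matrix.mul_sum, Matrix.sum_mul]
  refine Fintype.sum_equiv (Equiv.mulLeft y) _ _ fun x => ?_
  simp only [Equiv.coe_mulLeft, mul_inv_rev, map_mul, Matrix.mul_assoc]
  rw [← map_mul, inv_mul_cancel, map_one, Matrix.mul_one]

lemma sum_mul_single_mul_inv_apply (ρ : G →* Matrix m m ℂ) (σ : G →* Matrix n n ℂ)
    (i a : m) (b : n) (j : n) :
    (∑ x, ρ x * Matrix.single a b (1 : ℂ) * σ x⁻¹) i j = ∑ x, ρ x i a * σ x⁻¹ b j := by
  simp [Matrix.sum_apply, Matrix.mul_apply, Matrix.single_apply, ite_and]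

lemma NoIntertwiner.sum_apply_mul_inv_apply {ρ : G →* Matrix m m ℂ} {σ : G →* Matrix n n ℂ}
    (h : NoIntertwiner ρ σ) (i a : m) (b j : n) : ∑ x, ρ x i a * σ x⁻¹ b j = 0 := by
  rw [← sum_mul_single_mul_inv_apply, h _ (mul_sum_mul_mul_inv ρ σ _), Matrix.zero_apply]

lemma IsSchurIrreducible.sum_apply_mul_inv_apply {ρ : G →* Matrix m m ℂ}
    (h : IsSchurIrreducible ρ) (i a b j : m) :
    ∑ x, ρ x i a * ρ x⁻¹ b j =
      if a = b ∧ i = j then (Fintype.card G / Fintype.card m : ℂ) else 0 := by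
  obtain ⟨c, hc⟩ := h _ fun x => (mul_sum_mul_mul_inv ρ ρ (Matrix.single a b 1) x).symm
  have hm : (Fintype.card m : ℂ) ≠ 0 := Nat.cast_ne_zero.mpr (@Fintype.card_ne_zero m _ ⟨i⟩)
  have hconj : ∀ x, (ρ x * Matrix.single a b (1 : ℂ) * ρ x⁻¹).trace = if a = b then 1 else 0 := by
    intro x
    rw [Matrix.trace_mul_cycle, ← map_mul, inv_mul_cancel, map_one, Matrix.one_mul]
    split_ifs with hab
    · rw [hab, Matrix.trace_single_eq_same]
    · exact Matrix.trace_single_eq_of_ne _ _ _ hab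
  have htrace : c * Fintype.card m = if a = b then (Fintype.card G : ℂ) else 0 := by
    have := congrArg Matrix.trace hc
    simp only [Matrix.trace_sum, hconj, Finset.sum_const, Finset.card_univ, Matrix.trace_smul,
      Matrix.trace_one, smul_eq_mul, nsmul_eq_mul] at this
    rw [← this]
    split_ifs <;> simp
  have hcval : c = if a = b then (Fintype.card G / Fintype.card m : ℂ) else 0 := by
    rw [eq_div_of_mul_eq hm htrace, ite_div, zero_div]
  rw [← sum_mul_single_mul_inv_apply, hc, Matrix.smul_apply, Matrix.one_apply, hcval, ite_and]
  split_ifs <;> simp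

lemma sum_character_smul_inv_apply (σ : G →* Matrix n n ℂ) (ρ : G →* Matrix m m ℂ) (j l : m) :
    (∑ y, character σ y • ρ y⁻¹) j l = ∑ i, ∑ y, σ y i i * ρ y⁻¹ j l := by
  simp only [Matrix.sum_apply, Matrix.smul_apply, character, Matrix.trace, Matrix.diag,
    smul_eq_mul, Finset.sum_mul]
  exact Finset.sum_comm

lemma NoIntertwiner.sum_character_smul_inv {σ : G →* Matrix n n ℂ} {ρ : G →* Matrix m m ℂ}
    (h : NoIntertwiner σ ρ) : ∑ y, character σ y • ρ y⁻¹ = 0 := by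
  ext j l
  simp [sum_character_smul_inv_apply, h.sum_apply_mul_inv_apply]

lemma IsSchurIrreducible.sum_character_smul_inv {ρ : G →* Matrix m m ℂ}
    (h : IsSchurIrreducible ρ) :
    ∑ y, character ρ y • ρ y⁻¹ = (Fintype.card G / Fintype.card m : ℂ) • 1 := by
  ext j l
  simp [sum_character_smul_inv_apply, h.sum_apply_mul_inv_apply, Matrix.one_apply, ite_and]

lemma conv_character_apply (σ : G →* Matrix n n ℂ) (ρ : G →* Matrix m m ℂ) (x : G) :
    conv (character σ) (character ρ) x =
      (Fintype.card G : ℂ)⁻¹ * ((∑ y, character σ y • ρ y⁻¹) * ρ x).trace := by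
  simp only [conv, character, Matrix.sum_mul, Matrix.trace_sum, Matrix.smul_mul,
    Matrix.trace_smul, smul_eq_mul, map_mul]

lemma NoIntertwiner.conv_character {σ : G →* Matrix n n ℂ} {ρ : G →* Matrix m m ℂ}
    (h : NoIntertwiner σ ρ) : conv (character σ) (character ρ) = 0 := by
  ext x
  simp [conv_character_apply, h.sum_character_smul_inv]

lemma IsSchurIrreducible.conv_character_self {ρ : G →* Matrix m m ℂ}
    (h : IsSchurIrreducible ρ) :
    conv (character ρ) (character ρ) = (Fintype.card m : ℂ)⁻¹ • character ρ := by
  ext x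
  rw [conv_character_apply, h.sum_character_smul_inv, Matrix.smul_mul, Matrix.one_mul,
    Matrix.trace_smul, Pi.smul_apply, smul_eq_mul, smul_eq_mul, character]
  have hG : (Fintype.card G : ℂ) ≠ 0 := Nat.cast_ne_zero.mpr Fintype.card_ne_zero
  field_simp

lemma sum_character_mul_conj_eq_card_mul_conv {σ : G →* Matrix n n ℂ}
    (hσ : ∀ x, σ x ∈ Matrix.unitaryGroup n ℂ) (ρ : G →* Matrix m m ℂ) :
    ∑ x, character ρ x * conj (character σ x) =
      Fintype.card G * conv (character ρ) (character σ) 1 := by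
  have hG : (Fintype.card G : ℂ) ≠ 0 := Nat.cast_ne_zero.mpr Fintype.card_ne_zero
  simp only [conv, mul_one, character_inv_of_unitary hσ, mul_inv_cancel_left₀ hG]

lemma NoIntertwiner.ip_conv_character {σ : G →* Matrix n n ℂ} {ρ : G →* Matrix m m ℂ}
    (h : NoIntertwiner σ ρ) (hσ : ∀ x, σ x ∈ Matrix.unitaryGroup n ℂ) (f : G → ℂ) :
    ip (conv (character ρ) f) (conv (character σ) f) = 0 := by
  have hstar : (fun z => conj (character σ z⁻¹)) = character σ := by
    ext z
    rw [character_inv_of_unitary hσ, Complex.conj_conj]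
  rw [ip_conv_right, hstar, ← conv_assoc, h.conv_character, conv_zero_left, ip_zero_left]

end Characters

lemma sum_mul_conj_apply_one_of_orthonormal {G : Type*} [Group G] [Fintype G] [DecidableEq G]
    {ι : Type*} [Fintype ι] [DecidableEq ι] (χ : ι → G → ℂ)
    (hclass : ∀ i x y, IsConj x y → χ i x = χ i y)
    (horth : ∀ i j, ∑ x, χ i x * conj (χ j x) = if i = j then (Fintype.card G : ℂ) else 0)
    (hcard : Nat.card (ConjClasses G) = Fintype.card ι) (x : G) :
    ∑ i, χ i x * conj (χ i 1) = if x = 1 then (Fintype.card G : ℂ) else 0 := by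
  classical
  have hG : (Fintype.card G : ℂ) ≠ 0 := Nat.cast_ne_zero.mpr Fintype.card_ne_zero
  let rep : ConjClasses G → G := fun c => c.exists_rep.choose
  have hrep : ∀ i y, χ i (rep (ConjClasses.mk y)) = χ i y := fun i y =>
    hclass i _ _ (ConjClasses.mk_eq_mk_iff_isConj.mp (ConjClasses.mk y).exists_rep.choose_spec)
  let A : Matrix ι (ConjClasses G) ℂ := fun i c =>
    (Fintype.card G : ℂ)⁻¹ * ∑ y with ConjClasses.mk y = c, conj (χ i y)
  let B : Matrix (ConjClasses G) ι ℂ := fun c j => χ j (rep c)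
  have hAB : A * B = 1 := by
    ext i j
    have hfiber : ∀ c, A i c * B c j =
        (Fintype.card G : ℂ)⁻¹ * ∑ y with ConjClasses.mk y = c, χ j y * conj (χ i y) := by
      intro c
      simp only [A, B, mul_assoc, Finset.sum_mul]
      congr 1
      refine Finset.sum_congr rfl fun y hy => ?_
      obtain rfl := (Finset.mem_filter.mp hy).2
      rw [hrep, mul_comm]
    rw [Matrix.mul_apply, Finset.sum_congr rfl fun c _ => hfiber c, ← Finset.mul_sum,
      Finset.sum_fiberwise, horth, Matrix.one_apply]
    obtain rfl | hij := eq_or_ne i j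
    · simp [hG]
    · simp [hij, hij.symm]
  -- `A * B = 1` is the row orthogonality of the square character table; the other product
  -- `B * A = 1`, read at the classes of `x` and `1`, is the claim.
  have hBA := (Matrix.mul_eq_one_comm_of_card_eq _ _ _
    (by rw [← hcard, Nat.card_eq_fintype_card])).mp hAB
  have hentry := congrFun (congrFun hBA (ConjClasses.mk x)) (ConjClasses.mk 1)
  rw [Matrix.mul_apply] at hentry
  simp only [A, B, hrep, Matrix.one_apply, ConjClasses.mk_eq_mk_iff_isConj, isConj_one_left,
    Finset.filter_eq', Finset.mem_univ, if_true, Finset.sum_singleton] at hentry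
  calc ∑ i, χ i x * conj (χ i 1)
      = Fintype.card G * ∑ i, χ i x * ((Fintype.card G : ℂ)⁻¹ * conj (χ i 1)) := by
        rw [Finset.mul_sum]
        exact Finset.sum_congr rfl fun i _ => by field_simp
    _ = if x = 1 then (Fintype.card G : ℂ) else 0 := by
        rw [hentry]
        split_ifs <;> simp

section IrreducibleFamily

variable {G : Type*} [Group G] [Fintype G]
variable {k : ℕ} {d : Fin k → ℕ} (π : (r : Fin k) → G →* Matrix (Fin (d r)) (Fin (d r)) ℂ)

lemma sum_character_mul_conj_eq_ite (hdpos : ∀ r, 0 < d r)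
    (hunit : ∀ r x, π r x ∈ Matrix.unitaryGroup (Fin (d r)) ℂ)
    (hirr : ∀ r, IsSchurIrreducible (π r)) (hneq : ∀ r s, r ≠ s → NoIntertwiner (π r) (π s))
    (r s : Fin k) :
    ∑ x, character (π r) x * conj (character (π s) x) =
      if r = s then (Fintype.card G : ℂ) else 0 := by
  rw [sum_character_mul_conj_eq_card_mul_conv (hunit s)]
  split_ifs with hrs
  · subst hrs
    have hd : (d r : ℂ) ≠ 0 := Nat.cast_ne_zero.mpr (hdpos r).ne'
    rw [(hirr r).conv_character_self, Pi.smul_apply, character_one, smul_eq_mul,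
      Fintype.card_fin]
    field_simp
  · rw [(hneq r s hrs).conv_character, Pi.zero_apply, mul_zero]

lemma sum_natCast_smul_character [DecidableEq G] (hdpos : ∀ r, 0 < d r)
    (hunit : ∀ r x, π r x ∈ Matrix.unitaryGroup (Fin (d r)) ℂ)
    (hirr : ∀ r, IsSchurIrreducible (π r)) (hneq : ∀ r s, r ≠ s → NoIntertwiner (π r) (π s))
    (hcard : Nat.card (ConjClasses G) = k) :
    ∑ r, (d r : ℂ) • character (π r) = fun x => if x = 1 then (Fintype.card G : ℂ) else 0 := by
  ext x
  rw [← sum_mul_conj_apply_one_of_orthonormal (fun r => character (π r))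
    (fun r _ _ => character_eq_of_isConj (π r))
    (sum_character_mul_conj_eq_ite π hdpos hunit hirr hneq)
    (by rw [hcard, Fintype.card_fin])]
  simp [character_one, mul_comm]

end IrreducibleFamily

lemma gwavelet_eq_sum {G : Type*} [Group G] {k : ℕ} (d : Fin k → ℕ)
    (π : (r : Fin k) → G →* Matrix (Fin (d r)) (Fin (d r)) ℂ) (γ : Fin k → ℂ) :
    gwavelet d π γ = ∑ r, γ r • (d r : ℂ) • character (π r) := by
  ext x
  simp only [gwavelet, character, Finset.sum_apply, Pi.smul_apply, smul_eq_mul]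
  exact Finset.sum_congr rfl fun r _ => by ring

theorem stmt8 {G : Type*} [Group G] [Fintype G]
    {k : ℕ} (d : Fin k → ℕ) (hdpos : ∀ r, 0 < d r)
    (π : (r : Fin k) → G →* Matrix (Fin (d r)) (Fin (d r)) ℂ)
    (hunit : ∀ r x, π r x ∈ Matrix.unitaryGroup (Fin (d r)) ℂ)
    (hirr : ∀ (r : Fin k) (M : Matrix (Fin (d r)) (Fin (d r)) ℂ),
      (∀ x, M * π r x = π r x * M) → ∃ c : ℂ, M = c • (1 : Matrix (Fin (d r)) (Fin (d r)) ℂ))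
    (hneq : ∀ (r s : Fin k), r ≠ s → ∀ T : Matrix (Fin (d r)) (Fin (d s)) ℂ,
      (∀ x, π r x * T = T * π s x) → T = 0)
    (hcard : Nat.card (ConjClasses G) = k)
    {J : ℕ} (γ : Fin (J + 1) → Fin k → ℂ)
    (hPar : ∀ r : Fin k, ∑ j : Fin (J + 1), Complex.normSq (γ j r) = 1)
    (f : G → ℂ) :
    ∑ j : Fin (J + 1), nsq (conv (gwavelet d π (γ j)) f) = nsq f := by
  classical
  set F : Fin k → G → ℂ := fun r => conv ((d r : ℂ) • character (π r)) f
  have hwavelet : ∀ j, conv (gwavelet d π (γ j)) f = ∑ r, γ j r • F r := fun j => by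
    simp only [gwavelet_eq_sum, conv_sum_left, conv_smul_left, F]
  have horth : Pairwise fun r s => ip (F r) (F s) = 0 := fun r s hrs => by
    simp only [F, conv_smul_left, ip_smul_left, ip_smul_right,
      NoIntertwiner.ip_conv_character (hneq s r hrs.symm) (hunit s), mul_zero]
  have hsum : ∑ r, F r = f := by
    rw [← conv_sum_left, sum_natCast_smul_character π hdpos hunit hirr hneq hcard,
      conv_ite_one_left]
  simp only [hwavelet]
  rw [sum_nsq_sum_smul_of_pairwise_ip_eq_zero F horth γ hPar, hsum]
end

section
/- (Structural energy identity) Let {γ_j}_{0≤j≤J} be a kernel with Σ_{j=0}^J |γ_j(r)|² = 1 for all r. With φ = ψ_{γ_0}, U[j]f = |ψ_{γ_j} ∗ f|, U[p] the composition over a path p = (j_1,…,j_m) ∈ {1,…,J}^m, and S[p]f = φ ∗ U[p]f, it holds for every m ≥ 0: Σ_{p∈{1,…,J}^m} ‖U[p]f‖² = Σ_{p∈{1,…,J}^{m+1}} ‖U[p]f‖² + Σ_{p∈{1,…,J}^m} ‖S[p]f‖². -/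
open scoped BigOperators
open MeasureTheory

/-!
By Schur orthogonality, `∑ₓ ψ_γ(x u⁻¹) conj ψ_δ(x v⁻¹) = |G| ∑_r d_r γ(r) conj δ(r) χ_r(u⁻¹ v)`.
Summing over `j` with `γ = δ = γ_j`, the Parseval condition and the column orthogonality
`∑_r d_r χ_r(w) = |G| [w = 1]` turn the right side into `|G|² [u = v]`, which says that
`∑_j ‖ψ_{γ_j} ∗ g‖² = ‖g‖²` for every `g`. Taking moduli preserves the norm, so applying this to
`g = U[p] f` for each path `p` of length `m` and splitting off `j = 0` gives the identity.

Column orthogonality follows from row orthogonality: the `k` characters are orthogonal class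
functions, hence span the `k`-dimensional space of class functions, and
`∑_r d_r χ_r - |G| [· = 1]` is a class function orthogonal to all of them.
-/

section SchurOrthogonality

variable {G : Type*} [Group G] {n o : Type*} [Fintype n] [Fintype o]
  [DecidableEq n] [DecidableEq o]

theorem Matrix.trace_mul_trace_eq_sum {R : Type*} [CommSemiring R]
    (X : Matrix n n R) (Y : Matrix o o R) :
    X.trace * Y.trace = ∑ i, ∑ a, (X * (Matrix.single i a 1 : Matrix n o R) * Y) i a := by
  simp only [Matrix.mul_apply, Matrix.single_apply, Matrix.trace, Matrix.diag, Finset.sum_mul_sum]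
  simp [ite_and]

theorem conj_trace_eq_trace_inv (ρ : G →* Matrix n n ℂ)
    (hρ : ∀ x, ρ x ∈ Matrix.unitaryGroup n ℂ) (x : G) :
    starRingEnd ℂ (ρ x).trace = (ρ x⁻¹).trace := by
  have hstar : star (ρ x) = ρ x⁻¹ := calc
    star (ρ x) = star (ρ x) * ρ x * ρ x⁻¹ := by
      rw [mul_assoc, ← map_mul, mul_inv_cancel, map_one, mul_one]
    _ = ρ x⁻¹ := by rw [Unitary.star_mul_self_of_mem (hρ x), one_mul]
  rw [← hstar, Matrix.star_eq_conjTranspose, Matrix.trace_conjTranspose]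
  rfl

/- Irreducibility and inequivalence of matrix representations, in the form in which Schur's lemma
delivers them. -/
def HasScalarCommutant (ρ : G →* Matrix n n ℂ) : Prop :=
  ∀ M : Matrix n n ℂ, (∀ x, M * ρ x = ρ x * M) → ∃ c : ℂ, M = c • 1

def HasNoNonzeroIntertwiner (ρ₁ : G →* Matrix n n ℂ) (ρ₂ : G →* Matrix o o ℂ) : Prop :=
  ∀ T : Matrix n o ℂ, (∀ x, ρ₁ x * T = T * ρ₂ x) → T = 0

variable [Fintype G]

def schurAverage (ρ₁ : G →* Matrix n n ℂ) (ρ₂ : G →* Matrix o o ℂ) (M : Matrix n o ℂ) :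
    Matrix n o ℂ :=
  ∑ x, ρ₁ x * M * ρ₂ x⁻¹

theorem schurAverage_intertwines (ρ₁ : G →* Matrix n n ℂ) (ρ₂ : G →* Matrix o o ℂ)
    (M : Matrix n o ℂ) (y : G) :
    ρ₁ y * schurAverage ρ₁ ρ₂ M = schurAverage ρ₁ ρ₂ M * ρ₂ y := by
  simp only [schurAverage, Matrix.mul_sum, Matrix.sum_mul]
  refine Fintype.sum_bijective (y * ·) (Group.mulLeft_bijective y) _ _ fun x => ?_
  simp only [map_mul, _root_.mul_inv_rev, Matrix.mul_assoc]
  rw [← map_mul ρ₂, inv_mul_cancel, map_one, Matrix.mul_one]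

theorem trace_schurAverage (ρ : G →* Matrix n n ℂ) (M : Matrix n n ℂ) :
    (schurAverage ρ ρ M).trace = Fintype.card G * M.trace := by
  simp [schurAverage, Matrix.trace_sum, Matrix.trace_mul_cycle (ρ _), ← map_mul]

theorem schurAverage_eq_smul_one [Nonempty n] (ρ : G →* Matrix n n ℂ)
    (hρ : HasScalarCommutant ρ) (M : Matrix n n ℂ) :
    schurAverage ρ ρ M = (Fintype.card G * M.trace / Fintype.card n) • 1 := by
  obtain ⟨c, hc⟩ := hρ _ fun x => (schurAverage_intertwines ρ ρ M x).symm
  have htrace := trace_schurAverage ρ M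
  rw [hc, Matrix.trace_smul, Matrix.trace_one, smul_eq_mul] at htrace
  rw [hc, ← htrace, mul_div_cancel_right₀ _ (Nat.cast_ne_zero.2 Fintype.card_ne_zero)]

theorem sum_trace_mul_trace_inv_eq_sum_schurAverage (ρ₁ : G →* Matrix n n ℂ)
    (ρ₂ : G →* Matrix o o ℂ) (A : Matrix n n ℂ) (C : Matrix o o ℂ) :
    ∑ x, (ρ₁ x * A).trace * (C * ρ₂ x⁻¹).trace
      = ∑ i, ∑ a, schurAverage ρ₁ ρ₂ (A * (Matrix.single i a 1 : Matrix n o ℂ) * C) i a := by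
  simp only [Matrix.trace_mul_trace_eq_sum, schurAverage, Matrix.sum_apply, Matrix.mul_assoc]
  rw [Finset.sum_comm]
  exact Finset.sum_congr rfl fun i _ => Finset.sum_comm

theorem sum_trace_mul_trace_inv_of_irreducible [Nonempty n] (ρ : G →* Matrix n n ℂ)
    (hρ : HasScalarCommutant ρ) (A C : Matrix n n ℂ) :
    ∑ x, (ρ x * A).trace * (C * ρ x⁻¹).trace
      = Fintype.card G / Fintype.card n * (A * C).trace := by
  simp only [sum_trace_mul_trace_inv_eq_sum_schurAverage, schurAverage_eq_smul_one ρ hρ,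
    Matrix.smul_apply, Matrix.one_apply, smul_eq_mul, mul_ite, mul_one, mul_zero,
    Finset.sum_ite_eq, Finset.mem_univ, if_true]
  rw [← Finset.sum_div, ← Finset.mul_sum, ← Matrix.trace_sum, ← Finset.sum_mul,
    ← Finset.mul_sum, Matrix.sum_single_one, mul_one]
  ring

theorem sum_trace_mul_trace_inv_of_inequivalent (ρ₁ : G →* Matrix n n ℂ)
    (ρ₂ : G →* Matrix o o ℂ) (h : HasNoNonzeroIntertwiner ρ₁ ρ₂) (A : Matrix n n ℂ)
    (C : Matrix o o ℂ) :
    ∑ x, (ρ₁ x * A).trace * (C * ρ₂ x⁻¹).trace = 0 := by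
  simp [sum_trace_mul_trace_inv_eq_sum_schurAverage,
    h _ (schurAverage_intertwines ρ₁ ρ₂ _)]

end SchurOrthogonality

section OrthogonalFamily

variable {α ι : Type*} [Fintype α] [Fintype ι] [DecidableEq ι]

theorem sum_sum_smul_mul_conj_of_orthogonal (χ : ι → α → ℂ) {c : ℂ}
    (horth : ∀ i j, ∑ x, χ i x * starRingEnd ℂ (χ j x) = if i = j then c else 0)
    (a : ι → ℂ) (j : ι) :
    ∑ x, (∑ i, a i • χ i) x * starRingEnd ℂ (χ j x) = a j * c := by
  simp only [Finset.sum_apply, Pi.smul_apply, smul_eq_mul, Finset.sum_mul, mul_assoc]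
  rw [Finset.sum_comm]
  simp [← Finset.mul_sum, horth]

theorem eq_zero_of_forall_sum_mul_conj_eq_zero (V : Submodule ℂ (α → ℂ)) (χ : ι → α → ℂ)
    (hχV : ∀ i, χ i ∈ V) (hdim : Module.finrank ℂ V = Fintype.card ι) {c : ℂ} (hc : c ≠ 0)
    (horth : ∀ i j, ∑ x, χ i x * starRingEnd ℂ (χ j x) = if i = j then c else 0)
    {F : α → ℂ} (hF : F ∈ V) (hFχ : ∀ j, ∑ x, F x * starRingEnd ℂ (χ j x) = 0) : F = 0 := by
  have hpair := sum_sum_smul_mul_conj_of_orthogonal χ horth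
  have hli : LinearIndependent ℂ χ := Fintype.linearIndependent_iff.2 fun a ha j => by
    have hj := hpair a j
    simp only [ha, Pi.zero_apply, zero_mul, Finset.sum_const_zero] at hj
    exact (mul_eq_zero.1 hj.symm).resolve_right hc
  have hspan : Submodule.span ℂ (Set.range χ) = V :=
    Submodule.eq_of_le_of_finrank_eq (Submodule.span_le.2 (Set.range_subset_iff.2 hχV))
      (by rw [finrank_span_eq_card hli, hdim])
  obtain ⟨a, rfl⟩ := (Submodule.mem_span_range_iff_exists_fun ℂ).1 (hspan ▸ hF)
  have ha : a = 0 := funext fun j => by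
    have hj := hpair a j
    rw [hFχ j] at hj
    exact (mul_eq_zero.1 hj.symm).resolve_right hc
  simp [ha]

end OrthogonalFamily

section ClassFunctions

variable (G : Type*) [Group G]

def classFunctions : Submodule ℂ (G → ℂ) :=
  LinearMap.range (LinearMap.funLeft ℂ ℂ (ConjClasses.mk : G → ConjClasses G))

theorem finrank_classFunctions [Finite G] :
    Module.finrank ℂ (classFunctions G) = Nat.card (ConjClasses G) := by
  have : Fintype (ConjClasses G) := Fintype.ofFinite _
  rw [classFunctions, LinearMap.finrank_range_of_inj
    (LinearMap.funLeft_injective_of_surjective _ _ _ ConjClasses.mk_surjective),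
    Module.finrank_fintype_fun_eq_card, Nat.card_eq_fintype_card]

variable {G}

theorem mem_classFunctions_of_forall_conj {f : G → ℂ} (hf : ∀ x y, f (y * x * y⁻¹) = f x) :
    f ∈ classFunctions G := by
  refine ⟨Quotient.lift f fun a b hab => ?_, rfl⟩
  obtain ⟨y, rfl⟩ := isConj_iff.1 hab
  exact (hf a y).symm

theorem trace_mem_classFunctions {n : Type*} [Fintype n] [DecidableEq n]
    (ρ : G →* Matrix n n ℂ) : (fun x => (ρ x).trace) ∈ classFunctions G :=
  mem_classFunctions_of_forall_conj fun x y => by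
    rw [map_mul, map_mul, Matrix.trace_mul_cycle, ← map_mul, inv_mul_cancel, map_one, one_mul]

end ClassFunctions

section Characters

variable {G : Type*} [Group G] [Fintype G] {k : ℕ} {d : Fin k → ℕ}
  (π : (r : Fin k) → G →* Matrix (Fin (d r)) (Fin (d r)) ℂ)

theorem sum_trace_mul_trace_eq_ite (hdpos : ∀ r, 0 < d r)
    (hirr : ∀ r, HasScalarCommutant (π r))
    (hneq : ∀ r s, r ≠ s → HasNoNonzeroIntertwiner (π r) (π s)) (r s : Fin k) (u v : G) :
    ∑ x, (π r (x * u⁻¹)).trace * (π s (v * x⁻¹)).trace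
      = if r = s then Fintype.card G / d r * (π r (u⁻¹ * v)).trace else 0 := by
  simp only [map_mul]
  split_ifs with hrs
  · subst hrs
    have : Nonempty (Fin (d r)) := ⟨⟨0, hdpos r⟩⟩
    rw [sum_trace_mul_trace_inv_of_irreducible _ (hirr r), Fintype.card_fin]
  · exact sum_trace_mul_trace_inv_of_inequivalent _ _ (hneq r s hrs) _ _

theorem sum_trace_mul_conj_trace (hunit : ∀ r x, π r x ∈ Matrix.unitaryGroup (Fin (d r)) ℂ)
    (hdpos : ∀ r, 0 < d r) (hirr : ∀ r, HasScalarCommutant (π r))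
    (hneq : ∀ r s, r ≠ s → HasNoNonzeroIntertwiner (π r) (π s)) (r s : Fin k) :
    ∑ x, (π r x).trace * starRingEnd ℂ (π s x).trace
      = if r = s then (Fintype.card G : ℂ) else 0 := by
  have h := sum_trace_mul_trace_eq_ite π hdpos hirr hneq r s 1 1
  simp only [inv_one, mul_one, one_mul, map_one, Matrix.trace_one, Fintype.card_fin] at h
  simp only [conj_trace_eq_trace_inv (π s) (hunit s), h]
  split_ifs
  · exact div_mul_cancel₀ _ (Nat.cast_ne_zero.2 (hdpos r).ne')
  · rfl

theorem sum_dim_mul_trace_eq_ite [DecidableEq G]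
    (hunit : ∀ r x, π r x ∈ Matrix.unitaryGroup (Fin (d r)) ℂ)
    (hdpos : ∀ r, 0 < d r) (hirr : ∀ r, HasScalarCommutant (π r))
    (hneq : ∀ r s, r ≠ s → HasNoNonzeroIntertwiner (π r) (π s))
    (hcard : Nat.card (ConjClasses G) = k) (w : G) :
    ∑ r, (d r : ℂ) * (π r w).trace = if w = 1 then (Fintype.card G : ℂ) else 0 := by
  have horth := sum_trace_mul_conj_trace π hunit hdpos hirr hneq
  set χ : Fin k → G → ℂ := fun r x => (π r x).trace
  set F : G → ℂ := (∑ r, (d r : ℂ) • χ r) - fun x => if x = 1 then (Fintype.card G : ℂ) else 0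
  have hF : F ∈ classFunctions G := by
    refine Submodule.sub_mem _
      (Submodule.sum_mem _ fun r _ => Submodule.smul_mem _ _ (trace_mem_classFunctions _))
      (mem_classFunctions_of_forall_conj fun x y => by simp only [conj_eq_one_iff])
  have hFχ : ∀ s, ∑ x, F x * starRingEnd ℂ (χ s x) = 0 := fun s => by
    simp only [F, Pi.sub_apply, sub_mul, Finset.sum_sub_distrib,
      sum_sum_smul_mul_conj_of_orthogonal χ horth, ite_mul, zero_mul, Finset.sum_ite_eq',
      Finset.mem_univ, if_true, χ, map_one, Matrix.trace_one, Fintype.card_fin, map_natCast]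
    ring
  have hF0 := eq_zero_of_forall_sum_mul_conj_eq_zero (classFunctions G) χ
    (fun r => trace_mem_classFunctions _) (by rw [finrank_classFunctions, hcard, Fintype.card_fin])
    (Nat.cast_ne_zero.2 Fintype.card_ne_zero) horth hF hFχ
  simpa [F, χ, sub_eq_zero] using congrFun hF0 w

end Characters

section Frame

variable {G : Type*} [Fintype G]

theorem ofReal_nsq_s9 (g : G → ℂ) :
    (nsq g : ℂ) = (Fintype.card G : ℂ)⁻¹ * ∑ x, g x * starRingEnd ℂ (g x) := by
  simp [nsq, Complex.mul_conj]

variable [Group G]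

theorem conv_apply_eq_sum (ψ g : G → ℂ) (x : G) :
    conv ψ g x = (Fintype.card G : ℂ)⁻¹ * ∑ u, ψ (x * u⁻¹) * g u := by
  rw [conv]
  congr 1
  exact Fintype.sum_equiv ((Equiv.inv G).trans (Equiv.mulRight x)) _ _ fun y => by simp

theorem ofReal_nsq_conv (ψ g : G → ℂ) :
    (nsq (conv ψ g) : ℂ) = (Fintype.card G : ℂ)⁻¹ ^ 3 *
      ∑ u, ∑ v, g u * starRingEnd ℂ (g v) * ∑ x, ψ (x * u⁻¹) * starRingEnd ℂ (ψ (x * v⁻¹)) := by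
  have hx : ∀ x, conv ψ g x * starRingEnd ℂ (conv ψ g x) = (Fintype.card G : ℂ)⁻¹ ^ 2 *
      ∑ u, ∑ v, g u * starRingEnd ℂ (g v) * (ψ (x * u⁻¹) * starRingEnd ℂ (ψ (x * v⁻¹))) := by
    intro x
    rw [conv_apply_eq_sum, map_mul, map_inv₀, map_natCast, map_sum, mul_mul_mul_comm,
      Finset.sum_mul_sum, ← sq]
    simp only [map_mul]
    exact congrArg _ (Finset.sum_congr rfl fun u _ => Finset.sum_congr rfl fun v _ => by ring)
  rw [ofReal_nsq_s9, Finset.sum_congr rfl fun x _ => hx x, ← Finset.mul_sum, ← mul_assoc,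
    Finset.sum_comm]
  congr 1
  · ring
  · refine Finset.sum_congr rfl fun u _ => ?_
    rw [Finset.sum_comm]
    simp only [Finset.mul_sum]

theorem sum_nsq_conv_eq_nsq [DecidableEq G] {ι : Type*} [Fintype ι] (ψ : ι → G → ℂ)
    (hψ : ∀ u v, ∑ j, ∑ x, ψ j (x * u⁻¹) * starRingEnd ℂ (ψ j (x * v⁻¹))
      = if u = v then (Fintype.card G : ℂ) ^ 2 else 0) (g : G → ℂ) :
    ∑ j, nsq (conv (ψ j) g) = nsq g := by
  apply Complex.ofReal_injective
  have hN : (Fintype.card G : ℂ) ≠ 0 := Nat.cast_ne_zero.2 Fintype.card_ne_zero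
  calc ((∑ j, nsq (conv (ψ j) g) : ℝ) : ℂ)
      = (Fintype.card G : ℂ)⁻¹ ^ 3 * ∑ u, ∑ v, g u * starRingEnd ℂ (g v) *
          ∑ j, ∑ x, ψ j (x * u⁻¹) * starRingEnd ℂ (ψ j (x * v⁻¹)) := by
        simp only [Complex.ofReal_sum, ofReal_nsq_conv, ← Finset.mul_sum]
        congr 1
        rw [Finset.sum_comm]
        refine Finset.sum_congr rfl fun u _ => ?_
        rw [Finset.sum_comm]
        simp only [Finset.mul_sum]
    _ = nsq g := by
        simp only [hψ, mul_ite, mul_zero, Finset.sum_ite_eq, Finset.mem_univ, if_true,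
          ofReal_nsq_s9, ← Finset.sum_mul]
        field_simp

end Frame

section Wavelets

variable {G : Type*} [Group G] [Fintype G] {k : ℕ} {d : Fin k → ℕ}
  (π : (r : Fin k) → G →* Matrix (Fin (d r)) (Fin (d r)) ℂ)

theorem sum_gwavelet_mul_conj_gwavelet
    (hunit : ∀ r x, π r x ∈ Matrix.unitaryGroup (Fin (d r)) ℂ)
    (hdpos : ∀ r, 0 < d r) (hirr : ∀ r, HasScalarCommutant (π r))
    (hneq : ∀ r s, r ≠ s → HasNoNonzeroIntertwiner (π r) (π s)) (γ δ : Fin k → ℂ) (u v : G) :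
    ∑ x, gwavelet d π γ (x * u⁻¹) * starRingEnd ℂ (gwavelet d π δ (x * v⁻¹))
      = Fintype.card G * ∑ r, d r * (γ r * starRingEnd ℂ (δ r)) * (π r (u⁻¹ * v)).trace := by
  have hconj : ∀ x, starRingEnd ℂ (gwavelet d π δ (x * v⁻¹))
      = ∑ s, (d s : ℂ) * starRingEnd ℂ (δ s) * (π s (v * x⁻¹)).trace := fun x => by
    rw [gwavelet, map_sum]
    refine Finset.sum_congr rfl fun s _ => ?_
    rw [map_mul, map_mul, Complex.conj_natCast, conj_trace_eq_trace_inv _ (hunit s),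
      mul_inv_rev, inv_inv]
  calc ∑ x, gwavelet d π γ (x * u⁻¹) * starRingEnd ℂ (gwavelet d π δ (x * v⁻¹))
      = ∑ x, ∑ r, ∑ s, (d r * γ r * (d s * starRingEnd ℂ (δ s))) *
          ((π r (x * u⁻¹)).trace * (π s (v * x⁻¹)).trace) := by
        refine Finset.sum_congr rfl fun x _ => ?_
        rw [hconj, gwavelet, Finset.sum_mul_sum]
        exact Finset.sum_congr rfl fun r _ => Finset.sum_congr rfl fun s _ => by ring
    _ = ∑ r, ∑ s, (d r * γ r * (d s * starRingEnd ℂ (δ s))) *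
          ∑ x, (π r (x * u⁻¹)).trace * (π s (v * x⁻¹)).trace := by
        rw [Finset.sum_comm]
        refine Finset.sum_congr rfl fun r _ => ?_
        rw [Finset.sum_comm]
        simp only [Finset.mul_sum]
    _ = ∑ r, (d r * γ r * (d r * starRingEnd ℂ (δ r))) *
          (Fintype.card G / d r * (π r (u⁻¹ * v)).trace) := by
        simp only [sum_trace_mul_trace_eq_ite π hdpos hirr hneq, mul_ite, mul_zero,
          Finset.sum_ite_eq, Finset.mem_univ, if_true]
    _ = _ := by
        rw [Finset.mul_sum]
        refine Finset.sum_congr rfl fun r _ => ?_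
        have : (d r : ℂ) ≠ 0 := Nat.cast_ne_zero.2 (hdpos r).ne'
        field_simp

theorem sum_sum_gwavelet_mul_conj_gwavelet_eq_ite [DecidableEq G]
    (hunit : ∀ r x, π r x ∈ Matrix.unitaryGroup (Fin (d r)) ℂ)
    (hdpos : ∀ r, 0 < d r) (hirr : ∀ r, HasScalarCommutant (π r))
    (hneq : ∀ r s, r ≠ s → HasNoNonzeroIntertwiner (π r) (π s))
    (hcard : Nat.card (ConjClasses G) = k) {ι : Type*} [Fintype ι] (γ : ι → Fin k → ℂ)
    (hPar : ∀ r, ∑ j, Complex.normSq (γ j r) = 1) (u v : G) :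
    ∑ j, ∑ x, gwavelet d π (γ j) (x * u⁻¹) * starRingEnd ℂ (gwavelet d π (γ j) (x * v⁻¹))
      = if u = v then (Fintype.card G : ℂ) ^ 2 else 0 := by
  have hγ : ∀ r, ∑ j, γ j r * starRingEnd ℂ (γ j r) = 1 := fun r => by
    simp_rw [Complex.mul_conj]
    exact_mod_cast hPar r
  simp only [sum_gwavelet_mul_conj_gwavelet π hunit hdpos hirr hneq, ← Finset.mul_sum]
  rw [Finset.sum_comm]
  simp only [← Finset.sum_mul, ← Finset.mul_sum, hγ, mul_one,
    sum_dim_mul_trace_eq_ite π hunit hdpos hirr hneq hcard, inv_mul_eq_one]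
  split_ifs <;> ring

end Wavelets

section Scattering

theorem nsq_ofReal_norm {G : Type*} [Fintype G] (h : G → ℂ) :
    nsq (fun x => ((‖h x‖ : ℝ) : ℂ)) = nsq h := by
  simp [nsq, Complex.normSq_eq_norm_sq]

variable {G : Type*} [Group G] [Fintype G] {J : ℕ} (ψ : Fin J → G → ℂ)

theorem Upath_append (p q : List (Fin J)) (f : G → ℂ) :
    Upath ψ (p ++ q) f = Upath ψ q (Upath ψ p f) := by
  induction p generalizing f with
  | nil => rfl
  | cons j p ih => exact ih _

theorem sum_nsq_Upath_succ (f : G → ℂ) (m : ℕ) :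
    ∑ p : Fin (m + 1) → Fin J, nsq (Upath ψ (List.ofFn p) f)
      = ∑ p : Fin m → Fin J, ∑ j, nsq (conv (ψ j) (Upath ψ (List.ofFn p) f)) := by
  rw [← (Fin.snocEquiv fun _ => Fin J).sum_comp, Fintype.sum_prod_type, Finset.sum_comm]
  refine Finset.sum_congr rfl fun p _ => Finset.sum_congr rfl fun j _ => ?_
  rw [List.ofFn_succ']
  simp only [Fin.snocEquiv_apply, Fin.snoc_castSucc, Fin.snoc_last, List.concat_eq_append,
    Upath_append]
  exact nsq_ofReal_norm _

theorem sum_nsq_Upath_eq_add (φ : G → ℂ)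
    (hframe : ∀ g, nsq (conv φ g) + ∑ j, nsq (conv (ψ j) g) = nsq g) (f : G → ℂ) (m : ℕ) :
    ∑ p : Fin m → Fin J, nsq (Upath ψ (List.ofFn p) f)
      = ∑ p : Fin (m + 1) → Fin J, nsq (Upath ψ (List.ofFn p) f)
        + ∑ p : Fin m → Fin J, nsq (conv φ (Upath ψ (List.ofFn p) f)) := by
  rw [sum_nsq_Upath_succ, ← Finset.sum_add_distrib]
  exact Finset.sum_congr rfl fun p _ => by rw [add_comm, hframe]

end Scattering

theorem stmt9 {G : Type*} [Group G] [Fintype G]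
    {k : ℕ} (d : Fin k → ℕ) (hdpos : ∀ r, 0 < d r)
    (π : (r : Fin k) → G →* Matrix (Fin (d r)) (Fin (d r)) ℂ)
    (hunit : ∀ r x, π r x ∈ Matrix.unitaryGroup (Fin (d r)) ℂ)
    (hirr : ∀ (r : Fin k) (M : Matrix (Fin (d r)) (Fin (d r)) ℂ),
      (∀ x, M * π r x = π r x * M) → ∃ c : ℂ, M = c • (1 : Matrix (Fin (d r)) (Fin (d r)) ℂ))
    (hneq : ∀ (r s : Fin k), r ≠ s → ∀ T : Matrix (Fin (d r)) (Fin (d s)) ℂ,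
      (∀ x, π r x * T = T * π s x) → T = 0)
    (hcard : Nat.card (ConjClasses G) = k)
    {J : ℕ} (γ : Fin (J + 1) → Fin k → ℂ)
    (hPar : ∀ r : Fin k, ∑ j : Fin (J + 1), Complex.normSq (γ j r) = 1)
    (f : G → ℂ) (m : ℕ) :
    ∑ p : Fin m → Fin J,
        nsq (Upath (fun j => gwavelet d π (γ j.succ)) (List.ofFn p) f)
      = (∑ p : Fin (m + 1) → Fin J,
          nsq (Upath (fun j => gwavelet d π (γ j.succ)) (List.ofFn p) f))
        + ∑ p : Fin m → Fin J, nsq (Sop d π γ (List.ofFn p) f) := by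
  classical
  have hframe : ∀ g, ∑ j, nsq (conv (gwavelet d π (γ j)) g) = nsq g :=
    sum_nsq_conv_eq_nsq _ <|
      sum_sum_gwavelet_mul_conj_gwavelet_eq_ite π hunit hdpos hirr hneq hcard γ hPar
  refine sum_nsq_Upath_eq_add _ (gwavelet d π (γ 0)) (fun g => ?_) f m
  rw [← hframe g, Fin.sum_univ_succ]
end
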